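/- For any α ∈ IO∞(ℤ) there exist γ, δ ∈ IO∞(ℤ) such that γ∘α∘δ is the identity map of ℤ. -/

import Mathlib

/-- A partial injective self-map of ℤ (encoded as a `PEquiv`) is monotone. -/
def PMono (f : ℤ ≃. ℤ) : Prop :=
  ∀ x y a b : ℤ, a ∈ f x → b ∈ f y → x ≤ y → a ≤ b

/-- Domain of a partial injective self-map of ℤ. -/
def PDom (f : ℤ ≃. ℤ) : Set ℤ := {x | (f x).isSome}

/-- Range of a partial injective self-map of ℤ. -/
def PRan (f : ℤ ≃. ℤ) : Set ℤ := {y | (f.symm y).isSome}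

/-- Membership in IO∞(ℤ): injective (built into `PEquiv`), monotone,
with cofinite domain and cofinite range. -/
def IOZ (f : ℤ ≃. ℤ) : Prop :=
  PMono f ∧ (PDom f)ᶜ.Finite ∧ (PRan f)ᶜ.Finite

/-!
Since `α` has cofinite domain, its undefined points lie in some `[-N, N]`. The map `γ` that pushes
`ℤ` monotonically off `[-N, N]` (by `x ↦ x ± (N + 1)`) is total and lies in IO∞(ℤ), so `β = γ∘α`
(first `γ`, then `α`) is a total element of the inverse monoid IO∞(ℤ). Hence `δ = β⁻¹` lies in
IO∞(ℤ) and `β∘β⁻¹` is the identity of `ℤ`.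
-/

open Set

theorem PRan_trans (f g : ℤ ≃. ℤ) : PRan (f.trans g) = PDom (g.symm.trans f.symm) := by
  rw [PRan, PEquiv.symm_trans_rev]
  rfl

theorem PMono.symm {f : ℤ ≃. ℤ} (hf : PMono f) : PMono f.symm := by
  intro x y a b ha hb hxy
  rw [PEquiv.mem_iff_mem] at ha hb
  by_contra! hba
  obtain rfl : x = y := le_antisymm hxy (hf b a y x hb ha hba.le)
  exact hba.ne (f.inj hb ha)

theorem PMono.trans {f g : ℤ ≃. ℤ} (hf : PMono f) (hg : PMono g) : PMono (f.trans g) := by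
  intro x y a b ha hb hxy
  obtain ⟨u, hu, hua⟩ := (PEquiv.mem_trans _ _ _ _).mp ha
  obtain ⟨v, hv, hvb⟩ := (PEquiv.mem_trans _ _ _ _).mp hb
  exact hg u v a b hua hvb (hf x y u v hu hv hxy)

theorem compl_PDom_trans_subset (f g : ℤ ≃. ℤ) :
    (PDom (f.trans g))ᶜ ⊆ (PDom f)ᶜ ∪ (fun y => (f.symm y).getD 0) '' (PDom g)ᶜ := by
  intro x hx
  rcases hfx : f x with _ | y
  · left
    simp [PDom, hfx]
  · right
    refine ⟨y, ?_, by simp [(PEquiv.eq_some_iff f).mpr hfx]⟩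
    simpa [PDom, PEquiv.trans, hfx] using hx

theorem finite_compl_PDom_trans {f g : ℤ ≃. ℤ} (hf : (PDom f)ᶜ.Finite) (hg : (PDom g)ᶜ.Finite) :
    (PDom (f.trans g))ᶜ.Finite :=
  (hf.union (hg.image _)).subset (compl_PDom_trans_subset f g)

theorem IOZ.symm {f : ℤ ≃. ℤ} (hf : IOZ f) : IOZ f.symm :=
  ⟨hf.1.symm, hf.2.2, hf.2.1⟩

theorem IOZ.trans {f g : ℤ ≃. ℤ} (hf : IOZ f) (hg : IOZ g) : IOZ (f.trans g) := by
  refine ⟨hf.1.trans hg.1, finite_compl_PDom_trans hf.2.1 hg.2.1, ?_⟩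
  rw [PRan_trans]
  exact finite_compl_PDom_trans hg.symm.2.1 hf.symm.2.1

def spread (N : ℕ) : ℤ ≃. ℤ where
  toFun x := some (if 0 ≤ x then x + (N + 1) else x - (N + 1))
  invFun y := if (N : ℤ) + 1 ≤ y then some (y - (N + 1))
    else if y ≤ -((N : ℤ) + 2) then some (y + (N + 1)) else none
  inv x y := by
    split_ifs <;> simp_all <;> omega

theorem spread_apply (N : ℕ) (x : ℤ) :
    spread N x = some (if 0 ≤ x then x + (N + 1) else x - (N + 1)) := rfl

theorem spread_symm_apply (N : ℕ) (y : ℤ) :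
    (spread N).symm y = if (N : ℤ) + 1 ≤ y then some (y - (N + 1))
      else if y ≤ -((N : ℤ) + 2) then some (y + (N + 1)) else none := rfl

theorem IOZ_spread (N : ℕ) : IOZ (spread N) := by
  refine ⟨?_, ?_, ?_⟩
  · intro x y a b ha hb hxy
    simp only [spread_apply, Option.mem_def, Option.some_inj] at ha hb
    subst ha hb
    split_ifs <;> omega
  · convert finite_empty
    simp [PDom, spread_apply]
  · refine (finite_Icc (-((N : ℤ) + 1)) N).subset fun y hy => ?_
    simp only [PRan, mem_compl_iff, mem_ofPred_eq, spread_symm_apply] at hy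
    split_ifs at hy
    · simp at hy
    · simp at hy
    · constructor <;> omega

theorem isSome_spread_trans {N : ℕ} {α : ℤ ≃. ℤ} (hα : (PDom α)ᶜ ⊆ Icc (-(N : ℤ)) N) (x : ℤ) :
    ((spread N).trans α x).isSome := by
  have hmem : (if 0 ≤ x then x + (N + 1) else x - (N + 1)) ∈ PDom α := by
    by_contra h
    have := hα h
    simp only [mem_Icc] at this
    split_ifs at this <;> omega
  exact hmem

theorem exists_nat_subset_Icc {s : Set ℤ} (hs : s.Finite) : ∃ N : ℕ, s ⊆ Icc (-(N : ℤ)) N := by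
  obtain ⟨M, hM⟩ := (hs.image abs).bddAbove
  exact ⟨M.toNat, fun z hz => abs_le.mp ((hM ⟨z, hz, rfl⟩).trans (Int.self_le_toNat M))⟩

/-- for any α ∈ IO∞(ℤ) there exist γ, δ ∈ IO∞(ℤ) with γ∘α∘δ = id. -/
theorem stmt9 (α : ℤ ≃. ℤ) (hα : IOZ α) :
    ∃ γ δ : ℤ ≃. ℤ, IOZ γ ∧ IOZ δ ∧ (γ.trans α).trans δ = PEquiv.refl ℤ := by
  obtain ⟨N, hN⟩ := exists_nat_subset_Icc hα.2.1
  have hβ : IOZ ((spread N).trans α) := (IOZ_spread N).trans hα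
  exact ⟨spread N, ((spread N).trans α).symm, IOZ_spread N, hβ.symm,
    PEquiv.trans_symm_eq_iff_forall_isSome.mpr (isSome_spread_trans hN)⟩
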